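/- For any pair of elements X, Y ∈ N satisfying X·(σ•X) = 1 and Y·(τ•Y)·(τ²•Y) = 1, there exists a 1-cocycle u ∈ Z¹(PSL(2,ℤ), N) with u(σ) = X and u(τ) = Y. -/

import Mathlib

/-- A 1-cocycle of `G` in a (possibly noncommutative) group `N` on which `G`
acts on the left by group automorphisms: `u (g₁ * g₂) = u g₁ * g₁ • u g₂`. -/
def IsCocycle {G N : Type*} [Group G] [Group N] [MulDistribMulAction G N]
    (u : G → N) : Prop :=
  ∀ g₁ g₂ : G, u (g₁ * g₂) = u g₁ * g₁ • u g₂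

/-- Two maps `u v : G → N` are cohomologous if there is `n : N` with
`v g = n⁻¹ * u g * g • n` for all `g`. -/
def Cohomologous {G N : Type*} [Group G] [Group N] [MulDistribMulAction G N]
    (u v : G → N) : Prop :=
  ∃ n : N, ∀ g : G, v g = n⁻¹ * u g * g • n

/-- The group `SL(2,ℤ)`. -/
abbrev SL2Z := Matrix.SpecialLinearGroup (Fin 2) ℤ

/-- The group `PSL(2,ℤ)`, the quotient of `SL(2,ℤ)` by its center `{±1}`. -/
abbrev PSL2Z := SL2Z ⧸ Subgroup.center SL2Z

/-- The image `σ` of the matrix `((0,-1),(1,0))` in `PSL(2,ℤ)`. -/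
def pslSigma : PSL2Z :=
  QuotientGroup.mk ⟨!![0, -1; 1, 0], by norm_num [Matrix.det_fin_two_of]⟩

/-- The image `τ` of the matrix `((0,-1),(1,-1))` in `PSL(2,ℤ)`. -/
def pslTau : PSL2Z :=
  QuotientGroup.mk ⟨!![0, -1; 1, -1], by norm_num [Matrix.det_fin_two_of]⟩

/-!
`PSL(2,ℤ)` is the free product of the cyclic groups `⟨σ⟩ ≅ C₂` and `⟨τ⟩ ≅ C₃`: `σ` and `τ`
generate it (since `S` and `T` generate `SL(2,ℤ)`), and the presentation has no further relations
by ping-pong on the upper half plane, where `σ` maps `{re > 0}` into `{re < 0}` and `τ`, `τ²` map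
`{re < 0}` into `{re > 0}`. The hypotheses on `X` and `Y` say exactly that `(X, σ)` and `(Y, τ)`
have order dividing `2` and `3` in `N ⋊ PSL(2,ℤ)`, so `σ ↦ (X, σ)`, `τ ↦ (Y, τ)` extends to a
homomorphism `PSL(2,ℤ) → N ⋊ PSL(2,ℤ)`. It is a section of the projection, because the two agree
on generators, and the `N`-component of a section is a cocycle.
-/

open Matrix ModularGroup UpperHalfPlane Monoid

section Cocycle

variable {G N : Type*} [Group G] [Group N] [MulDistribMulAction G N]

local notation "φ" => MulDistribMulAction.toMulAut G N

theorem isCocycle_left_of_rightHom_comp_eq_id (f : G →* N ⋊[φ] G)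
    (hf : SemidirectProduct.rightHom.comp f = MonoidHom.id G) :
    IsCocycle fun g => (f g).left := by
  intro g₁ g₂
  have hright : (f g₁).right = g₁ := DFunLike.congr_fun hf g₁
  simp only [map_mul, SemidirectProduct.mul_left, hright]
  rfl

theorem SemidirectProduct.mk_sq_eq_one {x : N} {g : G} (hx : x * g • x = 1) (hg : g ^ 2 = 1) :
    (⟨x, g⟩ : N ⋊[φ] G) ^ 2 = 1 :=
  SemidirectProduct.ext (by simpa [sq] using hx) (by simpa [sq] using hg)

theorem SemidirectProduct.mk_pow_three_eq_one {x : N} {g : G}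
    (hx : x * g • x * g ^ 2 • x = 1) (hg : g ^ 3 = 1) :
    (⟨x, g⟩ : N ⋊[φ] G) ^ 3 = 1 :=
  SemidirectProduct.ext (by simpa [pow_succ, sq, mul_smul, mul_assoc] using hx)
    (by simpa [pow_succ] using hg)

end Cocycle

section CyclicLift

variable {G : Type*} [Group G]

def cyclicLift (n : ℕ) (g : G) (hg : g ^ n = 1) : Multiplicative (ZMod n) →* G :=
  AddMonoidHom.toMultiplicativeLeft <|
    ZMod.lift n ⟨zmultiplesHom (Additive G) (Additive.ofMul g), by
      simpa using congrArg Additive.ofMul hg⟩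

theorem cyclicLift_ofAdd_intCast (n : ℕ) (g : G) (hg : g ^ n = 1) (k : ℤ) :
    cyclicLift n g hg (Multiplicative.ofAdd (k : ZMod n)) = g ^ k := by
  simp [cyclicLift]

theorem cyclicLift_ofAdd_one (n : ℕ) (g : G) (hg : g ^ n = 1) :
    cyclicLift n g hg (Multiplicative.ofAdd 1) = g := by
  simpa using cyclicLift_ofAdd_intCast n g hg 1

theorem exists_monoidHom_of_bijective_lift_cyclicLift {ι H : Type*} [Group H] {n : ι → ℕ}
    {g : ι → G} (hg : ∀ i, g i ^ n i = 1)
    (hbij : Function.Bijective (CoprodI.lift fun i => cyclicLift (n i) (g i) (hg i)))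
    {h : ι → H} (hh : ∀ i, h i ^ n i = 1) : ∃ f : G →* H, ∀ i, f (g i) = h i := by
  let e := MulEquiv.ofBijective _ hbij
  refine ⟨(CoprodI.lift fun i => cyclicLift (n i) (h i) (hh i)).comp e.symm.toMonoidHom,
    fun i => ?_⟩
  have he : e (CoprodI.of (i := i) (Multiplicative.ofAdd 1)) = g i := by
    simp [e, cyclicLift_ofAdd_one]
  simp [← he, cyclicLift_ofAdd_one]

end CyclicLift

theorem pslSigma_eq_mk_S : pslSigma = QuotientGroup.mk S := rfl

theorem pslTau_eq_mk_S_mul_T_inv : pslTau = QuotientGroup.mk (S * T⁻¹) := by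
  unfold pslTau
  congr 1
  ext i j
  fin_cases i <;> fin_cases j <;> simp [coe_S]

theorem S_mul_T_inv_pow_three : (S * T⁻¹) ^ 3 = 1 := by
  ext i j
  fin_cases i <;> fin_cases j <;> simp [pow_succ, coe_S, Matrix.mul_apply, Fin.sum_univ_two]

theorem pslSigma_sq : pslSigma ^ 2 = 1 := by
  rw [pslSigma_eq_mk_S, ← QuotientGroup.mk_pow, QuotientGroup.eq_one_iff, sq,
    show S * S = -1 from Subtype.ext S_mul_S_eq]
  exact Subgroup.mem_center_iff.mpr fun g => by simp

theorem pslTau_pow_three : pslTau ^ 3 = 1 := by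
  rw [pslTau_eq_mk_S_mul_T_inv, ← QuotientGroup.mk_pow, S_mul_T_inv_pow_three,
    QuotientGroup.mk_one]

theorem mk_T : (QuotientGroup.mk T : PSL2Z) = pslTau⁻¹ * pslSigma := by
  rw [pslTau_eq_mk_S_mul_T_inv, pslSigma_eq_mk_S, ← QuotientGroup.mk_inv,
    ← QuotientGroup.mk_mul]
  congr 1
  group

theorem pslTau_sq_eq_mk_T_mul_S : pslTau ^ 2 = QuotientGroup.mk (T * S) := by
  rw [QuotientGroup.mk_mul, mk_T, ← pslSigma_eq_mk_S, mul_assoc, ← sq, pslSigma_sq, mul_one]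
  exact eq_inv_of_mul_eq_one_left (by rw [← pow_succ, pslTau_pow_three])

theorem closure_pslSigma_pslTau : Subgroup.closure {pslSigma, pslTau} = ⊤ := by
  have h := congrArg (Subgroup.map (QuotientGroup.mk' (Subgroup.center SL2Z)))
    SpecialLinearGroup.SL2Z_generators
  rw [MonoidHom.map_closure, Set.image_pair,
    Subgroup.map_top_of_surjective _ (QuotientGroup.mk'_surjective _)] at h
  rw [eq_top_iff, ← h, Subgroup.closure_le, Set.pair_subset_iff, QuotientGroup.mk'_apply,
    QuotientGroup.mk'_apply, ← pslSigma_eq_mk_S, mk_T]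
  exact ⟨Subgroup.subset_closure (by simp),
    mul_mem (inv_mem (Subgroup.subset_closure (by simp))) (Subgroup.subset_closure (by simp))⟩

theorem smul_eq_self_of_mem_center {A : SL2Z} (hA : A ∈ Subgroup.center SL2Z) (z : ℍ) :
    A • z = z := by
  obtain ⟨r, -, hr⟩ := Matrix.SpecialLinearGroup.mem_center_iff.mp hA
  rw [sl_moeb]
  refine forall_smul_eq_self_iff_mem_center.mpr ?_ z
  rw [GeneralLinearGroup.mem_center_iff_val_mem_range_scalar]
  refine ⟨(r : ℝ), ?_⟩
  ext i j
  simp [← hr]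

noncomputable instance : MulAction PSL2Z ℍ :=
  MulAction.compHom ℍ <| QuotientGroup.lift _ (MulAction.toPermHom SL2Z ℍ) fun _ hA =>
    Equiv.ext (smul_eq_self_of_mem_center hA)

theorem mk_smul_upperHalfPlane (A : SL2Z) (z : ℍ) :
    (QuotientGroup.mk A : PSL2Z) • z = A • z := rfl

theorem re_S_smul (z : ℍ) : (S • z).re = -z.re / Complex.normSq z := by
  rw [modular_S_smul]
  show ((-(z : ℂ))⁻¹).re = _
  rw [Complex.inv_re, Complex.normSq_neg]
  simp [neg_div]

theorem re_pslSigma_smul_neg {z : ℍ} (hz : 0 < z.re) : (pslSigma • z).re < 0 := by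
  rw [pslSigma_eq_mk_S, mk_smul_upperHalfPlane, re_S_smul]
  exact div_neg_of_neg_of_pos (neg_neg_iff_pos.mpr hz) z.normSq_pos

theorem re_pslTau_smul_pos {z : ℍ} (hz : z.re < 0) : 0 < (pslTau • z).re := by
  rw [pslTau_eq_mk_S_mul_T_inv, mk_smul_upperHalfPlane, mul_smul, re_S_smul,
    ← _root_.zpow_neg_one, modular_T_zpow_smul]
  exact div_pos (by simp only [vadd_re, Int.cast_neg, Int.cast_one]; linarith) (normSq_pos _)

theorem re_pslTau_sq_smul_pos {z : ℍ} (hz : z.re < 0) : 0 < (pslTau ^ 2 • z).re := by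
  rw [pslTau_sq_eq_mk_T_mul_S, mk_smul_upperHalfPlane, mul_smul, modular_T_smul, vadd_re,
    re_S_smul]
  have : 0 < -z.re / Complex.normSq z := div_pos (by linarith) z.normSq_pos
  linarith

def sigmaTauOrder (b : Bool) : ℕ := cond b 3 2

def sigmaTau (b : Bool) : PSL2Z := cond b pslTau pslSigma

theorem sigmaTau_pow_order (b : Bool) : sigmaTau b ^ sigmaTauOrder b = 1 := by
  cases b
  exacts [pslSigma_sq, pslTau_pow_three]

theorem lift_cyclicLift_sigmaTau_injective :
    Function.Injective (CoprodI.lift fun b => cyclicLift _ _ (sigmaTau_pow_order b)) := by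
  refine CoprodI.lift_injective_of_ping_pong _ (.inr ⟨true, by simp [sigmaTauOrder]⟩)
    (fun b => cond b {z : ℍ | 0 < z.re} {z | z.re < 0}) ?nonempty ?disjoint ?pingPong
  case nonempty =>
    rintro (_ | _)
    exacts [⟨(-1 : ℝ) +ᵥ I, by simp⟩, ⟨(1 : ℝ) +ᵥ I, by simp⟩]
  case disjoint =>
    have hdisj : Disjoint {z : ℍ | z.re < 0} {z | 0 < z.re} :=
      Set.disjoint_left.mpr fun _ h1 h2 => lt_asymm (Set.mem_ofPred.mp h1) h2
    rintro (_ | _) (_ | _) hne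
    exacts [(hne rfl).elim, hdisj, hdisj.symm, (hne rfl).elim]
  case pingPong =>
    rintro (_ | _) (_ | _) hne k hk z ⟨w, hw, rfl⟩ <;> try exact (hne rfl).elim
    · have hC2 : ∀ k : Multiplicative (ZMod 2), k ≠ 1 → k = .ofAdd 1 := by decide
      rw [hC2 k hk]
      show cyclicLift 2 pslSigma pslSigma_sq (.ofAdd 1) • w ∈ {z : ℍ | z.re < 0}
      rw [cyclicLift_ofAdd_one]
      exact re_pslSigma_smul_neg hw
    · have hC3 : ∀ k : Multiplicative (ZMod 3), k ≠ 1 → k = .ofAdd 1 ∨ k = .ofAdd 1 ^ 2 := by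
        decide
      rcases hC3 k hk with rfl | rfl
      · show cyclicLift 3 pslTau pslTau_pow_three (.ofAdd 1) • w ∈ {z : ℍ | 0 < z.re}
        rw [cyclicLift_ofAdd_one]
        exact re_pslTau_smul_pos hw
      · show cyclicLift 3 pslTau pslTau_pow_three (.ofAdd 1 ^ 2) • w ∈ {z : ℍ | 0 < z.re}
        rw [map_pow, cyclicLift_ofAdd_one]
        exact re_pslTau_sq_smul_pos hw

theorem lift_cyclicLift_sigmaTau_surjective :
    Function.Surjective (CoprodI.lift fun b => cyclicLift _ _ (sigmaTau_pow_order b)) := by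
  rw [← MonoidHom.range_eq_top, eq_top_iff, ← closure_pslSigma_pslTau, Subgroup.closure_le,
    Set.pair_subset_iff]
  exact ⟨⟨CoprodI.of (i := false) (.ofAdd 1), by simp [cyclicLift_ofAdd_one, sigmaTau]⟩,
    ⟨CoprodI.of (i := true) (.ofAdd 1), by simp [cyclicLift_ofAdd_one, sigmaTau]⟩⟩

theorem exists_monoidHom_pslSigma_pslTau {H : Type*} [Group H] {s t : H} (hs : s ^ 2 = 1)
    (ht : t ^ 3 = 1) : ∃ f : PSL2Z →* H, f pslSigma = s ∧ f pslTau = t := by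
  obtain ⟨f, hf⟩ := exists_monoidHom_of_bijective_lift_cyclicLift sigmaTau_pow_order
    ⟨lift_cyclicLift_sigmaTau_injective, lift_cyclicLift_sigmaTau_surjective⟩
    (h := fun b => cond b t s) (by rintro (_ | _) <;> assumption)
  exact ⟨f, hf false, hf true⟩

theorem cocycle_exists_of_shimura_eichler {N : Type*} [Group N]
    [MulDistribMulAction PSL2Z N]
    (X Y : N) (hX : X * pslSigma • X = 1)
    (hY : Y * pslTau • Y * pslTau ^ 2 • Y = 1) :
    ∃ u : PSL2Z → N, IsCocycle u ∧ u pslSigma = X ∧ u pslTau = Y := by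
  obtain ⟨f, hfσ, hfτ⟩ := exists_monoidHom_pslSigma_pslTau
    (SemidirectProduct.mk_sq_eq_one hX pslSigma_sq)
    (SemidirectProduct.mk_pow_three_eq_one hY pslTau_pow_three)
  have hsection : SemidirectProduct.rightHom.comp f = MonoidHom.id PSL2Z :=
    MonoidHom.eq_of_eqOn_dense closure_pslSigma_pslTau <| by
      rintro _ (rfl | rfl) <;> simp [hfσ, hfτ]
  exact ⟨_, isCocycle_left_of_rightHom_comp_eq_id f hsection, by rw [hfσ], by rw [hfτ]⟩
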